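/- arXiv:2605.23225 — 2 statements merged into one kernel-verified Lean document; each statement's English description precedes it below -/
import Mathlib

section
/- Fix m ≥ 1 and probability distributions p, q over [n]. For each i let X_i ~ Poisson(m·p_i) and Y_i ~ Poisson(m·q_i) be independent, and set Z_i = ((X_i − Y_i)/m)·log(1/(X_i+Y_i)) (with Z_i = 0 when X_i + Y_i = 0). Then for any subset S ⊆ [n] with p_i + q_i > 0 for i ∈ S, |∑_{i∈S} (p_i − q_i) log(1/(m(p_i+q_i))) − E[∑_{i∈S} Z_i]| ≤ ∑_{i∈S} |p_i − q_i|/(m(p_i + q_i)). -/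
open Finset

/-- The Poisson probability mass function with rate `lam`. -/
noncomputable def poissonPMFReal (lam : ℝ) (k : ℕ) : ℝ :=
  Real.exp (-lam) * lam ^ k / (Nat.factorial k)

/-!
For one index put `λ = m p`, `μ = m q`, and `J = X + Y`, which is Poisson with rate
`t = λ + μ`. By the binomial theorem,
`E[(X - Y) 1{J = n + 1}] = (λ - μ) P(J = n)`, hence `E[(X - Y) log J] = (λ - μ) E[log (J + 1)]`
and the bias of the `i`-th term is `|p - q| |E[log (J + 1)] - log t|`. Finally
`log t ≤ E[log (J + 1)] ≤ log t + 1/t`: apply `log x ≤ log y + x / y - 1` once with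
`x / y = (J + 1) / t`, using `E[J] = t`, and once with `x / y = t / (J + 1)`, using
`E[t / (J + 1)] = P(J ≥ 1) ≤ 1`.
-/

open Real

section OneRate

variable {t : ℝ}

theorem poissonPMFReal_nonneg (ht : 0 ≤ t) (k : ℕ) : 0 ≤ poissonPMFReal t k := by
  unfold poissonPMFReal; positivity

theorem succ_mul_poissonPMFReal_succ (t : ℝ) (k : ℕ) :
    ((k : ℝ) + 1) * poissonPMFReal t (k + 1) = t * poissonPMFReal t k := by
  simp only [poissonPMFReal, Nat.factorial_succ, Nat.cast_mul, Nat.cast_succ]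
  field_simp
  ring

theorem hasSum_poissonPMFReal (t : ℝ) : HasSum (poissonPMFReal t) 1 := by
  have h := (NormedSpace.expSeries_div_hasSum_exp t).mul_left (exp (-t))
  rw [← exp_eq_exp_ℝ, ← exp_add, neg_add_cancel, exp_zero] at h
  exact h.congr_fun fun k => by simp only [poissonPMFReal, mul_div_assoc]

theorem hasSum_poissonPMFReal_mul_natCast (t : ℝ) :
    HasSum (fun k => poissonPMFReal t k * k) t := by
  rw [← hasSum_nat_add_iff' 1]
  simpa [mul_comm _ ((_ : ℕ) + (1 : ℝ)), succ_mul_poissonPMFReal_succ]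
    using (hasSum_poissonPMFReal t).mul_left t

theorem hasSum_poissonPMFReal_succ (t : ℝ) :
    HasSum (fun k => poissonPMFReal t (k + 1)) (1 - exp (-t)) := by
  simpa [poissonPMFReal] using (hasSum_nat_add_iff' 1).mpr (hasSum_poissonPMFReal t)

theorem summable_poissonPMFReal_mul_pow (t c : ℝ) :
    Summable fun k => poissonPMFReal t k * c ^ k := by
  refine ((summable_pow_div_factorial (c * t)).mul_left (exp (-t))).congr fun k => ?_
  simp only [poissonPMFReal, mul_pow]
  ring

end OneRate

theorem Real.log_le_log_add_div_sub_one {x y : ℝ} (hx : 0 < x) (hy : 0 < y) :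
    log x ≤ log y + x / y - 1 := by
  have h := log_le_sub_one_of_pos (div_pos hx hy)
  rw [log_div hx.ne' hy.ne'] at h
  linarith

section LogMoment

variable {t : ℝ}

theorem summable_poissonPMFReal_mul_log_succ (ht : 0 ≤ t) :
    Summable fun n : ℕ => poissonPMFReal t n * log (n + 1) := by
  refine (hasSum_poissonPMFReal_mul_natCast t).summable.of_nonneg_of_le (fun n => ?_) fun n => ?_
  · exact mul_nonneg (poissonPMFReal_nonneg ht n) (log_nonneg (by simp))
  · refine mul_le_mul_of_nonneg_left ?_ (poissonPMFReal_nonneg ht n)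
    linarith [log_le_sub_one_of_pos (Nat.cast_add_one_pos n)]

theorem tsum_poissonPMFReal_mul_log_succ_le (ht : 0 < t) :
    ∑' n : ℕ, poissonPMFReal t n * log (n + 1) ≤ log t + t⁻¹ := by
  have hmajorant := ((hasSum_poissonPMFReal t).mul_left (log t - 1 + t⁻¹)).add
    ((hasSum_poissonPMFReal_mul_natCast t).mul_left t⁻¹)
  rw [mul_one, inv_mul_cancel₀ ht.ne'] at hmajorant
  refine (hasSum_le (fun n => ?_) (summable_poissonPMFReal_mul_log_succ ht.le).hasSum
    hmajorant).trans_eq (by ring)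
  have h := log_le_log_add_div_sub_one (Nat.cast_add_one_pos n) ht
  have hP := poissonPMFReal_nonneg ht.le n
  calc poissonPMFReal t n * log (n + 1)
      ≤ poissonPMFReal t n * (log t + (n + 1) / t - 1) := mul_le_mul_of_nonneg_left h hP
    _ = _ := by field_simp; ring

theorem log_le_tsum_poissonPMFReal_mul_log_succ (ht : 0 < t) :
    log t ≤ ∑' n : ℕ, poissonPMFReal t n * log (n + 1) := by
  have hminorant := ((hasSum_poissonPMFReal t).mul_left (log t + 1)).sub
    (hasSum_poissonPMFReal_succ t)
  refine le_trans ?_ (hasSum_le (fun n => ?_) hminorant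
    (summable_poissonPMFReal_mul_log_succ ht.le).hasSum)
  · linarith [exp_pos (-t)]
  have h := log_le_log_add_div_sub_one ht (Nat.cast_add_one_pos n)
  have hP := poissonPMFReal_nonneg ht.le n
  have hshift := succ_mul_poissonPMFReal_succ t n
  calc (log t + 1) * poissonPMFReal t n - poissonPMFReal t (n + 1)
      = poissonPMFReal t n * (log t + 1 - t / (n + 1)) := by field_simp; linarith
    _ ≤ poissonPMFReal t n * log (n + 1) := mul_le_mul_of_nonneg_left (by linarith) hP

theorem abs_tsum_poissonPMFReal_mul_log_succ_sub_log_le (ht : 0 < t) :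
    |∑' n : ℕ, poissonPMFReal t n * log (n + 1) - log t| ≤ t⁻¹ := by
  have := log_le_tsum_poissonPMFReal_mul_log_succ ht
  have := tsum_poissonPMFReal_mul_log_succ_le ht
  rw [abs_le]
  constructor <;> linarith [inv_pos.2 ht]

end LogMoment

theorem HasSum.sum_antidiagonal {M : Type*} [AddCommMonoid M] [TopologicalSpace M]
    [ContinuousAdd M] [RegularSpace M] {f : ℕ × ℕ → M} {s : M} (hf : HasSum f s) :
    HasSum (fun n => ∑ ij ∈ antidiagonal n, f ij) s :=
  (Finset.HasAntidiagonal.sigmaAntidiagonalEquivProd.hasSum_iff.mpr hf).sigma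
    fun n => by simpa [sum_attach] using hasSum_fintype (fun ij : antidiagonal n => f ij)

section TwoRates

variable {a b : ℝ}

theorem summable_poissonPMFReal_mul_mul_of_abs_le_pow (ha : 0 ≤ a) (hb : 0 ≤ b) {c : ℝ}
    (hc : 0 ≤ c) {g : ℕ × ℕ → ℝ} (hg : ∀ ij, |g ij| ≤ c ^ (ij.1 + ij.2)) :
    Summable fun ij : ℕ × ℕ => poissonPMFReal a ij.1 * poissonPMFReal b ij.2 * g ij := by
  refine Summable.of_norm_bounded ((summable_poissonPMFReal_mul_pow a c).mul_of_nonneg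
    (summable_poissonPMFReal_mul_pow b c) (fun i => ?_) fun j => ?_) fun ij => ?_
  · exact mul_nonneg (poissonPMFReal_nonneg ha i) (pow_nonneg hc i)
  · exact mul_nonneg (poissonPMFReal_nonneg hb j) (pow_nonneg hc j)
  · rw [Real.norm_eq_abs, abs_mul, abs_mul, abs_of_nonneg (poissonPMFReal_nonneg ha _),
      abs_of_nonneg (poissonPMFReal_nonneg hb _)]
    calc _ ≤ poissonPMFReal a ij.1 * poissonPMFReal b ij.2 * c ^ (ij.1 + ij.2) :=
          mul_le_mul_of_nonneg_left (hg ij)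
            (mul_nonneg (poissonPMFReal_nonneg ha _) (poissonPMFReal_nonneg hb _))
      _ = _ := by rw [pow_add]; ring

theorem sum_antidiagonal_poissonPMFReal_mul (a b : ℝ) (n : ℕ) :
    ∑ ij ∈ antidiagonal n, poissonPMFReal a ij.1 * poissonPMFReal b ij.2
      = poissonPMFReal (a + b) n := by
  rw [poissonPMFReal, (Commute.all a b).add_pow', neg_add, exp_add, mul_sum, sum_div]
  refine sum_congr rfl fun ij hij => ?_
  obtain ⟨i, j⟩ := ij
  rw [HasAntidiagonal.mem_antidiagonal] at hij
  subst hij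
  simp only [poissonPMFReal, nsmul_eq_mul]
  rw [← Nat.add_choose_mul_factorial_mul_factorial i j, Nat.choose_symm_add]
  have hc : ((i + j).choose j : ℝ) ≠ 0 := Nat.cast_ne_zero.mpr (Nat.choose_pos (by omega)).ne'
  push_cast
  field_simp

theorem sum_antidiagonal_succ_poissonPMFReal_mul_fst (a b : ℝ) (n : ℕ) :
    ∑ ij ∈ antidiagonal (n + 1), poissonPMFReal a ij.1 * poissonPMFReal b ij.2 * ij.1
      = a * poissonPMFReal (a + b) n := by
  rw [Nat.sum_antidiagonal_succ, ← sum_antidiagonal_poissonPMFReal_mul, mul_sum]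
  simp only [Nat.cast_zero, mul_zero, zero_add, Nat.cast_succ]
  exact sum_congr rfl fun ij _ =>
    by linear_combination poissonPMFReal b ij.2 * succ_mul_poissonPMFReal_succ a ij.1

theorem sum_antidiagonal_succ_poissonPMFReal_mul_snd (a b : ℝ) (n : ℕ) :
    ∑ ij ∈ antidiagonal (n + 1), poissonPMFReal a ij.1 * poissonPMFReal b ij.2 * ij.2
      = b * poissonPMFReal (a + b) n := by
  rw [Nat.sum_antidiagonal_succ', ← sum_antidiagonal_poissonPMFReal_mul, mul_sum]
  simp only [Nat.cast_zero, mul_zero, zero_add, Nat.cast_succ]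
  exact sum_congr rfl fun ij _ =>
    by linear_combination poissonPMFReal a ij.1 * succ_mul_poissonPMFReal_succ b ij.2

theorem abs_natCast_sub_mul_log_add_le_four_pow (i j : ℕ) :
    |((i : ℝ) - j) * log (i + j)| ≤ 4 ^ (i + j) := by
  have hn : ((i + j : ℕ) : ℝ) ≤ 2 ^ (i + j) := by exact_mod_cast Nat.lt_two_pow_self.le
  push_cast at hn
  have hlog : |log ((i : ℝ) + j)| ≤ i + j := by
    rw [← Nat.cast_add, abs_of_nonneg (log_natCast_nonneg _)]
    exact log_le_self (Nat.cast_nonneg _)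
  rw [abs_mul, show (4 : ℝ) = 2 * 2 by norm_num, mul_pow]
  gcongr
  · have hi : (0 : ℝ) ≤ i := i.cast_nonneg
    have hj : (0 : ℝ) ≤ j := j.cast_nonneg
    exact abs_sub_le_iff.mpr ⟨by linarith, by linarith⟩
  · linarith

theorem tsum_tsum_poissonPMFReal_mul_sub_mul_log (ha : 0 ≤ a) (hb : 0 ≤ b) :
    ∑' (i : ℕ) (j : ℕ), poissonPMFReal a i * poissonPMFReal b j * (((i : ℝ) - j) * log (i + j))
      = (a - b) * ∑' n : ℕ, poissonPMFReal (a + b) n * log (n + 1) := by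
  have hs := summable_poissonPMFReal_mul_mul_of_abs_le_pow ha hb (c := 4) (by norm_num)
    fun ij => abs_natCast_sub_mul_log_add_le_four_pow ij.1 ij.2
  have hsum := hs.hasSum.sum_antidiagonal
  rw [← hasSum_nat_add_iff' 1] at hsum
  simp only [range_one, sum_singleton, Nat.antidiagonal_zero, CharP.cast_eq_zero, sub_self,
    zero_mul, mul_zero, sub_zero] at hsum
  rw [← hs.tsum_prod, ← tsum_mul_left, ← hsum.tsum_eq]
  refine tsum_congr fun n => ?_
  -- on the antidiagonal `i + j = n + 1`, so the logarithm factors out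
  rw [sum_congr rfl fun ij hij => by
      rw [← Nat.cast_add, HasAntidiagonal.mem_antidiagonal.mp hij, ← mul_assoc, mul_sub],
    ← sum_mul, sum_sub_distrib, sum_antidiagonal_succ_poissonPMFReal_mul_fst,
    sum_antidiagonal_succ_poissonPMFReal_mul_snd]
  push_cast
  ring

end TwoRates

theorem abs_sub_tsum_tsum_poissonPMFReal_le {m p q : ℝ} (hm : 0 < m) (hp : 0 ≤ p) (hq : 0 ≤ q)
    (hpq : 0 < p + q) :
    |(p - q) * log (1 / (m * (p + q))) - ∑' (x : ℕ) (y : ℕ), poissonPMFReal (m * p) x *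
        poissonPMFReal (m * q) y * (((x : ℝ) - y) / m * log (1 / ((x : ℝ) + y)))|
      ≤ |p - q| / (m * (p + q)) := by
  have h := tsum_tsum_poissonPMFReal_mul_sub_mul_log (mul_nonneg hm.le hp) (mul_nonneg hm.le hq)
  rw [← mul_add, ← mul_sub] at h
  set L := ∑' n : ℕ, poissonPMFReal (m * (p + q)) n * log (n + 1)
  have hmean : ∑' (x : ℕ) (y : ℕ), poissonPMFReal (m * p) x * poissonPMFReal (m * q) y *
      (((x : ℝ) - y) / m * log (1 / ((x : ℝ) + y))) = -(p - q) * L := by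
    calc _ = -m⁻¹ * ∑' (x : ℕ) (y : ℕ), poissonPMFReal (m * p) x * poissonPMFReal (m * q) y *
          (((x : ℝ) - y) * log (x + y)) := by
          rw [← tsum_mul_left]
          refine tsum_congr fun x => ?_
          rw [← tsum_mul_left]
          refine tsum_congr fun y => ?_
          rw [one_div, log_inv]
          ring
      _ = -(p - q) * L := by
          rw [h]
          field_simp
  rw [hmean, one_div, log_inv, abs_sub_comm, div_eq_mul_inv,
    show -(p - q) * L - (p - q) * -log (m * (p + q)) = -((p - q) * (L - log (m * (p + q)))) by
      ring, abs_neg, abs_mul]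
  exact mul_le_mul_of_nonneg_left
    (abs_tsum_poissonPMFReal_mul_log_succ_sub_log_le (mul_pos hm hpq)) (abs_nonneg _)

theorem stmt_9_general (n m : ℕ) (hm : 1 ≤ m) (p q : Fin n → ℝ)
    (hp : ∀ i, 0 ≤ p i) (hq : ∀ i, 0 ≤ q i)
    (S : Finset (Fin n)) (hS : ∀ i ∈ S, 0 < p i + q i) :
    |(∑ i ∈ S, (p i - q i) * Real.log (1 / (m * (p i + q i))))
      - ∑ i ∈ S, ∑' x : ℕ, ∑' y : ℕ,
          poissonPMFReal (m * p i) x * poissonPMFReal (m * q i) y *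
            (((x : ℝ) - (y : ℝ)) / m * Real.log (1 / ((x : ℝ) + (y : ℝ))))|
      ≤ ∑ i ∈ S, |p i - q i| / (m * (p i + q i)) := by
  rw [← sum_sub_distrib]
  refine (abs_sum_le_sum_abs _ _).trans (sum_le_sum fun i hi => ?_)
  exact abs_sub_tsum_tsum_poissonPMFReal_le (Nat.cast_pos.mpr hm) (hp i) (hq i) (hS i hi)

/-- Bias bound for the plug-in cross-entropy estimator: with
`X_i ~ Poisson(m p_i)`, `Y_i ~ Poisson(m q_i)` independent and
`Z_i = ((X_i − Y_i)/m) log(1/(X_i+Y_i))` (zero when `X_i + Y_i = 0`,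
which holds automatically as then `X_i − Y_i = 0`),
`|∑_{i∈S} (p_i−q_i) log(1/(m(p_i+q_i))) − E[∑_{i∈S} Z_i]|
  ≤ ∑_{i∈S} |p_i−q_i|/(m(p_i+q_i))`. -/
theorem stmt_9 (n m : ℕ) (hm : 1 ≤ m) (p q : Fin n → ℝ)
    (hp : ∀ i, 0 ≤ p i) (hq : ∀ i, 0 ≤ q i)
    (hps : ∑ i, p i = 1) (hqs : ∑ i, q i = 1)
    (S : Finset (Fin n)) (hS : ∀ i ∈ S, 0 < p i + q i) :
    |(∑ i ∈ S, (p i - q i) * Real.log (1 / (m * (p i + q i))))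
      - ∑ i ∈ S, ∑' x : ℕ, ∑' y : ℕ,
          poissonPMFReal (m * p i) x * poissonPMFReal (m * q i) y *
            (((x : ℝ) - (y : ℝ)) / m * Real.log (1 / ((x : ℝ) + (y : ℝ))))|
      ≤ ∑ i ∈ S, |p i - q i| / (m * (p i + q i)) :=
  stmt_9_general n m hm p q hp hq S hS
end

section
/- Let p, q be Bayes nets over {0,1}^n, each Markov with respect to a DAG G. Then D_KL(p̃ ‖ q̃_G) − D_KL(p̃ ‖ p̃_G) = ∑_{i=1}^n (D_KL(p̃_{X_i,Π_i} ‖ q̃_{X_i,Π_i}) − D_KL(p̃_{Π_i} ‖ q̃_{Π_i})) ≤ ∑_{i=1}^n D_KL(p̃_{X_i,Π_i} ‖ q̃_{X_i,Π_i}), for any distributions p̃, q̃ over {0,1}^n with full support, where Π_i is the parent set of node i in G, r_G denotes the Bayes-net projection r_G(x) = ∏_i r(x_i | π_i), and r_T denotes marginalization onto coordinates T. -/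
open Finset

/-- Marginal of a distribution `p` on `{0,1}^n` onto the coordinates in `T`. -/
noncomputable def margOn {n : ℕ} (p : (Fin n → Bool) → ℝ) (T : Finset (Fin n))
    (z : {i // i ∈ T} → Bool) : ℝ :=
  ∑ y ∈ Finset.univ.filter (fun y : Fin n → Bool => ∀ i : {i // i ∈ T}, y i.1 = z i), p y

/-- KL divergence between two functions on a finite type. -/
noncomputable def klDivF {α : Type*} [Fintype α] (a b : α → ℝ) : ℝ :=
  ∑ x, a x * Real.log (a x / b x)

/-- The Bayes-net projection of `r` onto the structure with parent sets `Par`: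
`r_G(x) = ∏_i r(x_i | x_{Π_i})`. -/
noncomputable def bnProj {n : ℕ} (r : (Fin n → Bool) → ℝ) (Par : Fin n → Finset (Fin n))
    (x : Fin n → Bool) : ℝ :=
  ∏ i, margOn r (insert i (Par i)) (fun j => x j.1) / margOn r (Par i) (fun j => x j.1)

/-!
Taking logarithms, `log r_G(x) = ∑ᵢ (log r_{X_i,Π_i}(x) − log r_{Π_i}(x))`, so the difference of
the two divergences is the `p̃`-expectation of `∑ᵢ` of the log-ratios of the marginals of `p̃` and
`q̃` on `{i} ∪ Π_i` and on `Π_i`. Each summand depends on `x` only through the corresponding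
coordinates, so its expectation is the KL divergence of the marginals. The inequality then drops
the parent terms, which are nonnegative by Gibbs' inequality because all marginals of a
probability distribution have total mass one.
-/

section KLDivergence

variable {α : Type*} [Fintype α]

lemma sub_le_mul_log_div {a b : ℝ} (ha : 0 ≤ a) (hb : 0 < b) :
    a - b ≤ a * Real.log (a / b) := by
  have h := mul_nonneg hb.le (InformationTheory.klFun_nonneg (div_nonneg ha hb.le))
  rw [InformationTheory.klFun_apply] at h
  field_simp at h
  linarith

lemma klDivF_nonneg {a b : α → ℝ} (ha : ∀ x, 0 ≤ a x) (hb : ∀ x, 0 < b x)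
    (hab : ∑ x, a x = ∑ x, b x) : 0 ≤ klDivF a b := by
  have h : ∑ x, (a x - b x) ≤ klDivF a b :=
    sum_le_sum fun x _ => sub_le_mul_log_div (ha x) (hb x)
  rwa [sum_sub_distrib, hab, sub_self] at h

lemma klDivF_sub_klDivF {a b c : α → ℝ} (hb : ∀ x, b x ≠ 0) (hc : ∀ x, c x ≠ 0) :
    klDivF a b - klDivF a c = ∑ x, a x * (Real.log (c x) - Real.log (b x)) := by
  rw [klDivF, klDivF, ← sum_sub_distrib]
  refine sum_congr rfl fun x _ => ?_
  rcases eq_or_ne (a x) 0 with h | h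
  · simp [h]
  · rw [Real.log_div h (hb x), Real.log_div h (hc x)]
    ring

end KLDivergence

section Marginals

variable {n : ℕ} (p q : (Fin n → Bool) → ℝ) (T : Finset (Fin n))

lemma margOn_pos (hp : ∀ x, 0 < p x) (z : {i // i ∈ T} → Bool) : 0 < margOn p T z := by
  refine sum_pos (fun y _ => hp y) ⟨fun i => if h : i ∈ T then z ⟨i, h⟩ else false, ?_⟩
  simp only [mem_filter, mem_univ, true_and]
  exact fun i => by simp [i.2]

lemma sum_margOn_mul (g : ({i // i ∈ T} → Bool) → ℝ) :
    ∑ z, margOn p T z * g z = ∑ x, p x * g (fun i => x i.1) := by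
  rw [← sum_fiberwise univ (fun x (i : {i // i ∈ T}) => x i.1)
    (fun x => p x * g (fun i => x i.1))]
  refine sum_congr rfl fun z _ => ?_
  rw [margOn, sum_mul]
  refine sum_congr (filter_congr fun y _ => by simp [funext_iff]) fun y hy => ?_
  rw [(mem_filter.mp hy).2]

lemma sum_margOn : ∑ z, margOn p T z = ∑ x, p x := by
  simpa using sum_margOn_mul p T fun _ => 1

lemma klDivF_margOn (hp : ∀ x, 0 < p x) (hq : ∀ x, 0 < q x) :
    klDivF (margOn p T) (margOn q T)
      = ∑ x, p x * (Real.log (margOn p T (fun j => x j.1))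
                   - Real.log (margOn q T (fun j => x j.1))) := by
  rw [klDivF, ← sum_margOn_mul p T fun z => Real.log (margOn p T z) - Real.log (margOn q T z)]
  refine sum_congr rfl fun z _ => ?_
  rw [Real.log_div (margOn_pos p T hp z).ne' (margOn_pos q T hq z).ne']

end Marginals

section BayesNetProjection

variable {n : ℕ} (Par : Fin n → Finset (Fin n)) {p q : (Fin n → Bool) → ℝ}

lemma bnProj_pos (hp : ∀ x, 0 < p x) (x : Fin n → Bool) : 0 < bnProj p Par x :=
  prod_pos fun _ _ => div_pos (margOn_pos p _ hp _) (margOn_pos p _ hp _)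

lemma log_bnProj (hp : ∀ x, 0 < p x) (x : Fin n → Bool) :
    Real.log (bnProj p Par x)
      = ∑ i, (Real.log (margOn p (insert i (Par i)) (fun j => x j.1))
            - Real.log (margOn p (Par i) (fun j => x j.1))) := by
  rw [bnProj, Real.log_prod fun i _ => (div_pos (margOn_pos p _ hp _) (margOn_pos p _ hp _)).ne']
  exact sum_congr rfl fun i _ => Real.log_div (margOn_pos p _ hp _).ne' (margOn_pos p _ hp _).ne'

theorem klDivF_bnProj_sub_klDivF_bnProj (hp : ∀ x, 0 < p x) (hq : ∀ x, 0 < q x) :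
    klDivF p (bnProj q Par) - klDivF p (bnProj p Par)
      = ∑ i, (klDivF (margOn p (insert i (Par i))) (margOn q (insert i (Par i)))
          - klDivF (margOn p (Par i)) (margOn q (Par i))) := by
  set L : ((Fin n → Bool) → ℝ) → Finset (Fin n) → (Fin n → Bool) → ℝ :=
    fun r T x => Real.log (margOn r T (fun j => x j.1))
  calc klDivF p (bnProj q Par) - klDivF p (bnProj p Par)
      = ∑ x, p x * (Real.log (bnProj p Par x) - Real.log (bnProj q Par x)) :=
        klDivF_sub_klDivF (fun x => (bnProj_pos Par hq x).ne') (fun x => (bnProj_pos Par hp x).ne')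
    _ = ∑ x, ∑ i, (p x * (L p (insert i (Par i)) x - L q (insert i (Par i)) x)
          - p x * (L p (Par i) x - L q (Par i) x)) := by
        refine sum_congr rfl fun x _ => ?_
        rw [log_bnProj Par hp, log_bnProj Par hq, ← sum_sub_distrib, mul_sum]
        exact sum_congr rfl fun i _ => by ring
    _ = _ := by
        rw [sum_comm]
        refine sum_congr rfl fun i _ => ?_
        rw [sum_sub_distrib, klDivF_margOn p q _ hp hq, klDivF_margOn p q _ hp hq]

end BayesNetProjection

theorem stmt_14_general (n : ℕ) (Par : Fin n → Finset (Fin n))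
    (pt qt : (Fin n → Bool) → ℝ)
    (hpt : ∀ x, 0 < pt x) (hqt : ∀ x, 0 < qt x)
    (hpts : ∑ x, pt x = 1) (hqts : ∑ x, qt x = 1) :
    klDivF pt (bnProj qt Par) - klDivF pt (bnProj pt Par)
        = ∑ i, (klDivF (margOn pt (insert i (Par i))) (margOn qt (insert i (Par i)))
            - klDivF (margOn pt (Par i)) (margOn qt (Par i)))
    ∧ klDivF pt (bnProj qt Par) - klDivF pt (bnProj pt Par)
        ≤ ∑ i, klDivF (margOn pt (insert i (Par i))) (margOn qt (insert i (Par i))) := by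
  have hdiff := klDivF_bnProj_sub_klDivF_bnProj Par hpt hqt
  refine ⟨hdiff, hdiff ▸ sum_le_sum fun i _ => sub_le_self _ ?_⟩
  exact klDivF_nonneg (fun z => (margOn_pos pt _ hpt z).le) (margOn_pos qt _ hqt)
    (by rw [sum_margOn, sum_margOn, hpts, hqts])

/-- For full-support `p̃, q̃` on `{0,1}^n` and a DAG with parent sets `Par`:
`D_KL(p̃ ‖ q̃_G) − D_KL(p̃ ‖ p̃_G)
  = ∑_i (D_KL(p̃_{X_i,Π_i} ‖ q̃_{X_i,Π_i}) − D_KL(p̃_{Π_i} ‖ q̃_{Π_i}))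
  ≤ ∑_i D_KL(p̃_{X_i,Π_i} ‖ q̃_{X_i,Π_i})`. -/
theorem stmt_14 (n : ℕ) (Par : Fin n → Finset (Fin n))
    (hdag : ∀ i, ∀ j ∈ Par i, j < i)
    (pt qt : (Fin n → Bool) → ℝ)
    (hpt : ∀ x, 0 < pt x) (hqt : ∀ x, 0 < qt x)
    (hpts : ∑ x, pt x = 1) (hqts : ∑ x, qt x = 1) :
    klDivF pt (bnProj qt Par) - klDivF pt (bnProj pt Par)
        = ∑ i, (klDivF (margOn pt (insert i (Par i))) (margOn qt (insert i (Par i)))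
            - klDivF (margOn pt (Par i)) (margOn qt (Par i)))
    ∧ klDivF pt (bnProj qt Par) - klDivF pt (bnProj pt Par)
        ≤ ∑ i, klDivF (margOn pt (insert i (Par i))) (margOn qt (insert i (Par i))) :=
  stmt_14_general n Par pt qt hpt hqt hpts hqts
end
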